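/- The limit as x → -∞ of the tail conditional variance Var[X | X < x] of a standard normal random variable X equals 0, and Var[X | X < 0] = 1 - 2/π. -/

import Mathlib

/-!
With `r = φ(x)/Φ(x)` the conditional variance is `1 - x r - r²`. Integrating
`d/dt (-φ(t)/t^(n+1)) = φ(t)/t^n + (n+1) φ(t)/t^(n+2)` over `(-∞, x]` relates the tail integrals
`∫_{-∞}^x φ(t)/t^n dt`, and for even `n` these are at most `Φ(x)/x^n`. With `n = 0, 2` this gives the
Mills-ratio bounds `x⁴ - 3 ≤ -x (x² - 1) r` and `-x r ≤ x² + 1`, which squeeze the variance to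
within `4/x²` of `0` for `x ≤ -2`. At `x = 0`, symmetry of `φ` gives `Φ(0) = 1/2`, and `φ(0)² = 1/(2π)`.
-/

open MeasureTheory Real Filter

/-- Standard normal density. -/
noncomputable def stdPdf (x : ℝ) : ℝ := (Real.sqrt (2 * Real.pi))⁻¹ * Real.exp (-x ^ 2 / 2)

/-- Standard normal distribution function. -/
noncomputable def stdCdf (x : ℝ) : ℝ := ∫ t in Set.Iic x, stdPdf t

open Set Topology ProbabilityTheory

lemma tendsto_inv_pow_atBot {n : ℕ} (hn : n ≠ 0) :
    Tendsto (fun t : ℝ => (t ^ n)⁻¹) atBot (𝓝 0) := by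
  refine tendsto_zero_iff_norm_tendsto_zero.2 ?_
  simp only [norm_inv, norm_pow, Real.norm_eq_abs]
  exact ((tendsto_pow_atTop hn).comp tendsto_abs_atBot_atTop).inv_tendsto_atTop

lemma stdPdf_eq_gaussianPDFReal : stdPdf = gaussianPDFReal 0 1 := by
  ext x
  simp [stdPdf, gaussianPDFReal]

lemma stdPdf_pos (x : ℝ) : 0 < stdPdf x := by
  unfold stdPdf
  positivity

lemma stdPdf_neg (x : ℝ) : stdPdf (-x) = stdPdf x := by
  simp [stdPdf]

lemma integrable_stdPdf : Integrable stdPdf :=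
  stdPdf_eq_gaussianPDFReal ▸ integrable_gaussianPDFReal 0 1

lemma integral_stdPdf : ∫ t, stdPdf t = 1 :=
  stdPdf_eq_gaussianPDFReal ▸ integral_gaussianPDFReal_eq_one 0 one_ne_zero

lemma continuous_stdPdf : Continuous stdPdf := by
  unfold stdPdf
  fun_prop

lemma hasDerivAt_stdPdf (t : ℝ) : HasDerivAt stdPdf (-t * stdPdf t) t := by
  have h := (((hasDerivAt_pow 2 t).neg.div_const 2).exp).const_mul (√(2 * π))⁻¹
  exact h.congr_deriv (by simp only [stdPdf, Pi.neg_apply]; ring)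

lemma tendsto_stdPdf_atBot : Tendsto stdPdf atBot (𝓝 0) := by
  have hsq : Tendsto (fun x : ℝ => x ^ 2) atBot atTop := by
    simpa [Function.comp_def] using
      (tendsto_pow_atTop two_ne_zero).comp (tendsto_neg_atBot_atTop (G := ℝ))
  have h : Tendsto (fun x : ℝ => -x ^ 2 / 2) atBot atBot :=
    (tendsto_neg_atTop_atBot.comp hsq).atBot_div_const (two_pos : (0 : ℝ) < 2)
  have := (tendsto_exp_atBot.comp h).const_mul (√(2 * π))⁻¹
  rwa [mul_zero] at this

lemma stdCdf_pos (x : ℝ) : 0 < stdCdf x := by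
  rw [stdCdf, setIntegral_pos_iff_support_of_nonneg_ae (.of_forall fun t => (stdPdf_pos t).le)
    integrable_stdPdf.integrableOn]
  simp [Function.support, (stdPdf_pos _).ne']

lemma stdCdf_zero : stdCdf 0 = 1 / 2 := by
  have hsym : ∫ t in Iic (0 : ℝ), stdPdf t = ∫ t in Ioi (0 : ℝ), stdPdf t := by
    simpa [stdPdf_neg] using integral_comp_neg_Iic (0 : ℝ) stdPdf
  have hsplit := intervalIntegral.integral_Iic_add_Ioi (b := (0 : ℝ))
    integrable_stdPdf.integrableOn integrable_stdPdf.integrableOn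
  rw [integral_stdPdf, ← hsym] at hsplit
  rw [stdCdf]
  linarith

section Tail

variable {x : ℝ} (hx : x < 0)
include hx

lemma integrableOn_stdPdf_div_pow (n : ℕ) :
    IntegrableOn (fun t => stdPdf t / t ^ n) (Iic x) := by
  refine Integrable.mono' (integrable_stdPdf.integrableOn.div_const (|x| ^ n)) ?_ ?_
  · exact (continuous_stdPdf.measurable.div (measurable_id.pow_const n)).aestronglyMeasurable
  · rw [ae_restrict_iff' measurableSet_Iic]
    refine .of_forall fun t (ht : t ≤ x) => ?_
    rw [norm_div, norm_pow, Real.norm_of_nonneg (stdPdf_pos t).le, Real.norm_eq_abs]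
    have hxt : |x| ≤ |t| := by
      rw [abs_of_neg hx, abs_of_neg (ht.trans_lt hx)]
      linarith
    exact div_le_div_of_nonneg_left (stdPdf_pos t).le (pow_pos (abs_pos.2 hx.ne) n)
      (pow_le_pow_left₀ (abs_nonneg x) hxt n)

lemma integral_stdPdf_div_pow_add (n : ℕ) :
    (∫ t in Iic x, stdPdf t / t ^ n) + (n + 1) * ∫ t in Iic x, stdPdf t / t ^ (n + 2)
      = -(stdPdf x / x ^ (n + 1)) := by
  have hint := integrableOn_stdPdf_div_pow hx
  have key := integral_Iic_of_hasDerivAt_of_tendsto' (a := x) (m := 0)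
    (f := fun t => -(stdPdf t / t ^ (n + 1)))
    (f' := fun t => stdPdf t / t ^ n + (n + 1) * (stdPdf t / t ^ (n + 2)))
    (fun t (ht : t ≤ x) => by
      have ht0 : t ≠ 0 := (ht.trans_lt hx).ne
      refine ((hasDerivAt_stdPdf t).div (hasDerivAt_pow (n + 1) t) (pow_ne_zero _ ht0)).neg
        |>.congr_deriv ?_
      field_simp
      push_cast
      ring)
    ((hint n).add ((hint (n + 2)).const_mul _))
    (by simpa [div_eq_mul_inv] using
      (tendsto_stdPdf_atBot.mul (tendsto_inv_pow_atBot n.succ_ne_zero)).neg)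
  rwa [integral_add (hint n) ((hint (n + 2)).const_mul _), integral_const_mul, sub_zero] at key

lemma integral_stdPdf_div_pow_mul_le {n : ℕ} (hn : Even n) :
    (∫ t in Iic x, stdPdf t / t ^ n) * x ^ n ≤ stdCdf x := by
  have hxn : 0 < x ^ n := hn.pow_pos hx.ne
  rw [← le_div_iff₀ hxn, stdCdf, ← integral_div]
  refine setIntegral_mono_on (integrableOn_stdPdf_div_pow hx n)
    (integrable_stdPdf.integrableOn.div_const _) measurableSet_Iic fun t (ht : t ≤ x) => ?_
  refine div_le_div_of_nonneg_left (stdPdf_pos t).le hxn ?_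
  rw [← hn.pow_abs, ← hn.pow_abs t]
  refine pow_le_pow_left₀ (abs_nonneg x) ?_ n
  rw [abs_of_neg hx, abs_of_neg (ht.trans_lt hx)]
  linarith

lemma stdCdf_add_integral_div_sq_mul :
    (stdCdf x + ∫ t in Iic x, stdPdf t / t ^ 2) * x = -stdPdf x := by
  have hibp := integral_stdPdf_div_pow_add hx 0
  simp only [pow_zero, div_one, zero_add, CharP.cast_eq_zero, one_mul, pow_one] at hibp
  rw [stdCdf, hibp]
  field_simp [hx.ne]

lemma neg_mul_stdPdf_le : -x * stdPdf x ≤ (x ^ 2 + 1) * stdCdf x := by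
  have e₀ := stdCdf_add_integral_div_sq_mul hx
  have hI₂ := integral_stdPdf_div_pow_mul_le hx even_two
  calc -x * stdPdf x = x ^ 2 * stdCdf x + (∫ t in Iic x, stdPdf t / t ^ 2) * x ^ 2 := by
        linear_combination (-x) * e₀
    _ ≤ (x ^ 2 + 1) * stdCdf x := by linarith

lemma stdCdf_mul_le : (x ^ 4 - 3) * stdCdf x ≤ -x * (x ^ 2 - 1) * stdPdf x := by
  have e₀ := stdCdf_add_integral_div_sq_mul hx
  have e₂ : ((∫ t in Iic x, stdPdf t / t ^ 2) + 3 * ∫ t in Iic x, stdPdf t / t ^ 4) * x ^ 3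
      = -stdPdf x := by
    have hibp := integral_stdPdf_div_pow_add hx 2
    norm_num only at hibp
    rw [hibp]
    field_simp [hx.ne]
  have hI₄ := integral_stdPdf_div_pow_mul_le hx (n := 4) (by decide)
  calc (x ^ 4 - 3) * stdCdf x = -x * (x ^ 2 - 1) * stdPdf x
        + 3 * ((∫ t in Iic x, stdPdf t / t ^ 4) * x ^ 4 - stdCdf x) := by
        linear_combination x ^ 3 * e₀ - x * e₂
    _ ≤ -x * (x ^ 2 - 1) * stdPdf x := by linarith

end Tail

noncomputable def tailVar (x : ℝ) : ℝ :=
  1 - x * stdPdf x / stdCdf x - stdPdf x ^ 2 / stdCdf x ^ 2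

lemma abs_tailVar_le {x : ℝ} (hx : x ≤ -2) : |tailVar x| ≤ 4 / x ^ 2 := by
  have hx₀ : x < 0 := by linarith
  have hΦ := stdCdf_pos x
  set u := x ^ 2
  set s := -x * stdPdf x / stdCdf x
  have hu : 4 ≤ u := by nlinarith
  have hs_le : s ≤ u + 1 := by
    rw [div_le_iff₀ hΦ]
    linarith [neg_mul_stdPdf_le hx₀]
  have hs_ge : u ^ 2 - 3 ≤ (u - 1) * s := by
    rw [mul_div_assoc', le_div_iff₀ hΦ]
    linear_combination stdCdf_mul_le hx₀
  have hV : u * tailVar x = u + u * s - s ^ 2 := by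
    simp only [tailVar, s, u]
    field_simp
    ring
  have key : |u * tailVar x| ≤ 4 := by
    rw [hV, abs_le]
    constructor <;> nlinarith
  rw [abs_mul, abs_of_pos (by positivity)] at key
  rw [le_div_iff₀ (by positivity), mul_comm]
  exact key

lemma tendsto_tailVar_atBot : Tendsto tailVar atBot (𝓝 0) := by
  have hbound : Tendsto (fun x : ℝ => 4 / x ^ 2) atBot (𝓝 0) := by
    simpa [div_eq_mul_inv] using (tendsto_inv_pow_atBot two_ne_zero).const_mul 4
  refine squeeze_zero_norm' ?_ hbound
  filter_upwards [eventually_le_atBot (-2 : ℝ)] with x hx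
  exact abs_tailVar_le hx

lemma tailVar_zero : tailVar 0 = 1 - 2 / π := by
  have hφ₀ : stdPdf 0 = (√(2 * π))⁻¹ := by simp [stdPdf]
  rw [tailVar, hφ₀, stdCdf_zero, inv_pow, sq_sqrt (by positivity)]
  field_simp
  ring

/-- The tail conditional variance `Var[X | X < x]` of a standard normal tends to `0` as
`x → -∞`, and equals `1 - 2/π` at `x = 0`. -/
theorem stmt_7 :
    Tendsto (fun x : ℝ => 1 - x * stdPdf x / stdCdf x - (stdPdf x) ^ 2 / (stdCdf x) ^ 2)
      atBot (nhds 0) ∧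
    1 - (0 : ℝ) * stdPdf 0 / stdCdf 0 - (stdPdf 0) ^ 2 / (stdCdf 0) ^ 2 = 1 - 2 / Real.pi :=
  ⟨tendsto_tailVar_atBot, tailVar_zero⟩
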